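/- Let k₁,k₂>0, J(z)=k₁/z¹²−k₂/z⁶ for z>0 and +∞ for z≤0, and let δ₁:=(2k₁/k₂)^{1/6} be the unique minimizer of J. Fix an integer j≥2 and a real z with 0<z≤δ₁. Then over all (z_1,…,z_j)∈ℝ^j with Σ_{s=1}^j z_s = j·z, the sum Σ_{s=1}^j J(z_s) attains its infimum, and it is attained exactly at the single point z_1=z_2=…=z_j=z; in particular inf{Σ_{s=1}^j J(z_s) : Σ_{s=1}^j z_s=jz} = j·J(z). -/

import Mathlib

open Filter Finset Set

noncomputable section

/-- The Lennard-Jones potential, extended by `+∞` on `(-∞,0]`. -/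
def LJ (k₁ k₂ : ℝ) (z : ℝ) : EReal :=
  if 0 < z then ((k₁ / z ^ 12 - k₂ / z ^ 6 : ℝ) : EReal) else ⊤

/-- The unique minimizer of the Lennard-Jones potential. -/
def delta1 (k₁ k₂ : ℝ) : ℝ := (2 * k₁ / k₂) ^ ((1 : ℝ) / 6)

/-! For `0 < z ≤ δ₁` the tangent line `ℓ` of `J` at `z` lies strictly below `J` away from `z`.
On `(-∞, 0]` this is because `J = +∞`. On `(0, ∞)`, `J' x < J' y` whenever `0 < x < y` and
`x ≤ δ₁`, so `J' < J'(z)` on `(0, z)` and `J' > J'(z)` on `(z, ∞)`, and the mean value theorem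
applies on either side of `z`. Summing `ℓ(z_s) ≤ J(z_s)` over a configuration with
`Σ z_s = jz` gives `Σ J(z_s) ≥ Σ ℓ(z_s) = j J(z)`, strictly as soon as some `z_s ≠ z`. -/

theorem EReal.coe_finset_sum {ι : Type*} (s : Finset ι) (f : ι → ℝ) :
    ((∑ i ∈ s, f i : ℝ) : EReal) = ∑ i ∈ s, (f i : EReal) :=
  map_sum (⟨⟨Real.toEReal, EReal.coe_zero⟩, EReal.coe_add⟩ : ℝ →+ EReal) f s

theorem add_deriv_mul_sub_lt_of_deriv_cross {f f' : ℝ → ℝ} {a z t : ℝ}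
    (hf : ∀ x ∈ Ioi a, HasDerivAt f (f' x) x) (hlt : ∀ x ∈ Ioo a z, f' x < f' z)
    (hgt : ∀ x ∈ Ioi z, f' z < f' x) (hz : a < z) (ht : a < t) (hne : t ≠ z) :
    f z + f' z * (t - z) < f t := by
  have hcont : ContinuousOn f (Ioi a) := fun x hx => (hf x hx).continuousAt.continuousWithinAt
  rcases hne.lt_or_gt with htz | hzt
  · obtain ⟨x, hx, hslope⟩ := exists_hasDerivAt_eq_slope f f' htz
      (hcont.mono (Icc_subset_Ioi_iff htz.le |>.2 ht))
      (fun x hx => hf x (ht.trans hx.1))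
    have := hlt x ⟨ht.trans hx.1, hx.2⟩
    rw [hslope, div_lt_iff₀ (sub_pos.2 htz)] at this
    linarith
  · obtain ⟨x, hx, hslope⟩ := exists_hasDerivAt_eq_slope f f' hzt
      (hcont.mono (Icc_subset_Ioi_iff hzt.le |>.2 hz))
      (fun x hx => hf x (hz.trans hx.1))
    have := hgt x hx.1
    rw [hslope, lt_div_iff₀ (sub_pos.2 hzt)] at this
    linarith

section AffineMinorant

variable {ι : Type*} [Fintype ι] {F : ℝ → EReal} {c m z : ℝ} {p : ι → ℝ}

theorem sum_affine_eq_of_sum_eq (hp : ∑ i, p i = Fintype.card ι * z) :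
    ∑ i, (c + m * (p i - z)) = Fintype.card ι * c := by
  rw [sum_add_distrib, ← mul_sum, sum_sub_distrib, hp, sum_const, sum_const, card_univ,
    nsmul_eq_mul, nsmul_eq_mul]
  ring

theorem affine_le_of_affine_lt (hFz : (c : EReal) ≤ F z)
    (hF : ∀ t ≠ z, ((c + m * (t - z) : ℝ) : EReal) < F t) (t : ℝ) :
    ((c + m * (t - z) : ℝ) : EReal) ≤ F t := by
  rcases eq_or_ne t z with rfl | ht
  · simpa using hFz
  · exact (hF t ht).le

theorem card_mul_le_sum_of_affine_lt (hFz : (c : EReal) ≤ F z)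
    (hF : ∀ t ≠ z, ((c + m * (t - z) : ℝ) : EReal) < F t)
    (hp : ∑ i, p i = Fintype.card ι * z) :
    ((Fintype.card ι * c : ℝ) : EReal) ≤ ∑ i, F (p i) := by
  rw [← sum_affine_eq_of_sum_eq (m := m) hp, EReal.coe_finset_sum]
  exact sum_le_sum fun i _ => affine_le_of_affine_lt hFz hF (p i)

theorem eq_const_of_sum_eq_of_affine_lt (hFz : (c : EReal) ≤ F z)
    (hF : ∀ t ≠ z, ((c + m * (t - z) : ℝ) : EReal) < F t)
    (hp : ∑ i, p i = Fintype.card ι * z)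
    (heq : ∑ i, F (p i) = ((Fintype.card ι * c : ℝ) : EReal)) : p = fun _ => z := by
  classical
  by_contra! hpz
  obtain ⟨i₀, hi₀⟩ := Function.ne_iff.1 hpz
  set ℓ : ℝ → ℝ := fun t => c + m * (t - z)
  set s := (univ : Finset ι).erase i₀
  have hrest : ∑ i ∈ s, (ℓ (p i) : EReal) ≤ ∑ i ∈ s, F (p i) :=
    sum_le_sum fun i _ => affine_le_of_affine_lt hFz hF (p i)
  have hrest_real : ∑ i ∈ s, (ℓ (p i) : EReal) = ((∑ i ∈ s, ℓ (p i) : ℝ) : EReal) :=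
    (EReal.coe_finset_sum _ _).symm
  have := calc
    ((Fintype.card ι * c : ℝ) : EReal) = (ℓ (p i₀) : EReal) + ∑ i ∈ s, (ℓ (p i) : EReal) := by
      rw [hrest_real, ← EReal.coe_add, add_sum_erase _ (fun i => ℓ (p i)) (mem_univ i₀),
        sum_affine_eq_of_sum_eq hp]
    _ < F (p i₀) + ∑ i ∈ s, F (p i) :=
      EReal.add_lt_add_of_lt_of_le' (hF _ hi₀) hrest
        (ne_bot_of_le_ne_bot (hrest_real ▸ EReal.coe_ne_bot _) hrest)
        (fun _ h => absurd (hrest_real ▸ h) (EReal.coe_ne_top _))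
    _ = ((Fintype.card ι * c : ℝ) : EReal) := by
      rw [add_sum_erase _ (fun i => F (p i)) (mem_univ i₀), heq]
  exact this.false

end AffineMinorant

def ljReal (k₁ k₂ z : ℝ) : ℝ := k₁ / z ^ 12 - k₂ / z ^ 6

def ljDeriv (k₁ k₂ z : ℝ) : ℝ := 6 * k₂ / z ^ 7 - 12 * k₁ / z ^ 13

section LennardJones

variable {k₁ k₂ : ℝ}

theorem LJ_of_pos {z : ℝ} (hz : 0 < z) : LJ k₁ k₂ z = ljReal k₁ k₂ z := if_pos hz

theorem LJ_of_nonpos {z : ℝ} (hz : z ≤ 0) : LJ k₁ k₂ z = ⊤ := if_neg hz.not_gt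

theorem hasDerivAt_ljReal {z : ℝ} (hz : z ≠ 0) :
    HasDerivAt (ljReal k₁ k₂) (ljDeriv k₁ k₂ z) z := by
  have h₁ := (hasDerivAt_const z k₁).div (hasDerivAt_pow 12 z) (pow_ne_zero 12 hz)
  have h₂ := (hasDerivAt_const z k₂).div (hasDerivAt_pow 6 z) (pow_ne_zero 6 hz)
  refine (h₁.sub h₂).congr_deriv ?_
  rw [ljDeriv]
  field_simp
  ring

theorem pow_six_mul_le_of_le_delta1 (hk₁ : 0 < k₁) (hk₂ : 0 < k₂) {z : ℝ} (hz0 : 0 ≤ z)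
    (hz : z ≤ delta1 k₁ k₂) : z ^ 6 * k₂ ≤ 2 * k₁ := by
  have hδ : delta1 k₁ k₂ ^ 6 = 2 * k₁ / k₂ := by
    rw [delta1, ← Real.rpow_natCast, ← Real.rpow_mul (by positivity)]
    norm_num
  rw [← le_div_iff₀ hk₂, ← hδ]
  exact pow_le_pow_left₀ hz0 hz 6

/- In the variables `a = 1/x > b = 1/y` the claim is `6k₂(a⁷ - b⁷) < 12k₁(a¹³ - b¹³)`, and
`k₂ ≤ 2k₁a⁶` bounds the left side by `12k₁(a¹³ - a⁶b⁷)`. -/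
theorem ljDeriv_lt_ljDeriv (hk₁ : 0 < k₁) {x y : ℝ} (hx : 0 < x) (hxy : x < y)
    (hx6 : x ^ 6 * k₂ ≤ 2 * k₁) : ljDeriv k₁ k₂ x < ljDeriv k₁ k₂ y := by
  obtain ⟨a, rfl⟩ : ∃ a, x = a⁻¹ := ⟨x⁻¹, (inv_inv x).symm⟩
  obtain ⟨b, rfl⟩ : ∃ b, y = b⁻¹ := ⟨y⁻¹, (inv_inv y).symm⟩
  have ha : 0 < a := inv_pos.1 hx
  have hb : 0 < b := inv_pos.1 (hx.trans hxy)
  have hba : b < a := (inv_lt_inv₀ ha hb).1 hxy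
  have hk₂ : k₂ ≤ 2 * k₁ * a ^ 6 := by
    rw [inv_pow, inv_mul_le_iff₀ (by positivity)] at hx6
    linarith
  simp only [ljDeriv, div_eq_mul_inv, inv_pow, inv_inv]
  have h7 : b ^ 7 < a ^ 7 := pow_lt_pow_left₀ hba hb.le (by norm_num)
  have h6 : b ^ 6 < a ^ 6 := pow_lt_pow_left₀ hba hb.le (by norm_num)
  have hmid : b ^ 13 < a ^ 6 * b ^ 7 := by
    rw [show b ^ 13 = b ^ 6 * b ^ 7 by ring]
    exact mul_lt_mul_of_pos_right h6 (by positivity)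
  nlinarith [mul_le_mul_of_nonneg_right hk₂ (sub_nonneg.2 h7.le)]

theorem ljReal_tangent_lt (hk₁ : 0 < k₁) (hk₂ : 0 < k₂) {z t : ℝ} (hz : 0 < z)
    (hz6 : z ^ 6 * k₂ ≤ 2 * k₁) (ht : 0 < t) (hne : t ≠ z) :
    ljReal k₁ k₂ z + ljDeriv k₁ k₂ z * (t - z) < ljReal k₁ k₂ t := by
  refine add_deriv_mul_sub_lt_of_deriv_cross (fun x hx => hasDerivAt_ljReal (ne_of_gt hx))
    (fun x hx => ljDeriv_lt_ljDeriv hk₁ hx.1 hx.2 ?_)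
    (fun x hx => ljDeriv_lt_ljDeriv hk₁ hz hx hz6) hz ht hne
  calc x ^ 6 * k₂ ≤ z ^ 6 * k₂ := by gcongr; exacts [hx.1.le, hx.2.le]
    _ ≤ 2 * k₁ := hz6

theorem tangent_lt_LJ (hk₁ : 0 < k₁) (hk₂ : 0 < k₂) {z t : ℝ} (hz : 0 < z)
    (hzδ : z ≤ delta1 k₁ k₂) (hne : t ≠ z) :
    ((ljReal k₁ k₂ z + ljDeriv k₁ k₂ z * (t - z) : ℝ) : EReal) < LJ k₁ k₂ t := by
  rcases le_or_gt t 0 with ht | ht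
  · rw [LJ_of_nonpos ht]
    exact EReal.coe_lt_top _
  · rw [LJ_of_pos ht, EReal.coe_lt_coe_iff]
    exact ljReal_tangent_lt hk₁ hk₂ hz (pow_six_mul_le_of_le_delta1 hk₁ hk₂ hz.le hzδ) ht hne

end LennardJones

theorem inf_convolution_no_oscillation_general (k₁ k₂ : ℝ) (hk₁ : 0 < k₁) (hk₂ : 0 < k₂)
    (j : ℕ) (z : ℝ) (hz0 : 0 < z) (hz : z ≤ delta1 k₁ k₂) :
    sInf {y : EReal | ∃ p : Fin j → ℝ, (∑ s, p s) = j * z ∧ y = ∑ s, LJ k₁ k₂ (p s)} =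
      ((j : ℝ) : EReal) * LJ k₁ k₂ z ∧
    ((j : ℝ) : EReal) * LJ k₁ k₂ z ∈
      {y : EReal | ∃ p : Fin j → ℝ, (∑ s, p s) = j * z ∧ y = ∑ s, LJ k₁ k₂ (p s)} ∧
    (∀ p : Fin j → ℝ, (∑ s, p s) = j * z →
      ((j : ℝ) : EReal) * LJ k₁ k₂ z ≤ ∑ s, LJ k₁ k₂ (p s)) ∧
    (∀ p : Fin j → ℝ, (∑ s, p s) = j * z →
      (∑ s, LJ k₁ k₂ (p s)) = ((j : ℝ) : EReal) * LJ k₁ k₂ z → p = fun _ => z) := by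
  have hLJz : LJ k₁ k₂ z = ljReal k₁ k₂ z := LJ_of_pos hz0
  have htangent : ∀ t ≠ z,
      ((ljReal k₁ k₂ z + ljDeriv k₁ k₂ z * (t - z) : ℝ) : EReal) < LJ k₁ k₂ t :=
    fun t => tangent_lt_LJ hk₁ hk₂ hz0 hz
  have hjz : ((j : ℝ) : EReal) * LJ k₁ k₂ z =
      ((Fintype.card (Fin j) * ljReal k₁ k₂ z : ℝ) : EReal) := by
    rw [hLJz, Fintype.card_fin, EReal.coe_mul]
  have hcard : ∀ p : Fin j → ℝ, ∑ s, p s = j * z → ∑ s, p s = Fintype.card (Fin j) * z :=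
    fun p hp => by rwa [Fintype.card_fin]
  have hleast : IsLeast {y : EReal | ∃ p : Fin j → ℝ, (∑ s, p s) = j * z ∧
      y = ∑ s, LJ k₁ k₂ (p s)} (((j : ℝ) : EReal) * LJ k₁ k₂ z) := by
    refine ⟨⟨fun _ => z, by simp, by simp⟩, ?_⟩
    rintro _ ⟨p, hp, rfl⟩
    rw [hjz]
    exact card_mul_le_sum_of_affine_lt hLJz.ge htangent (hcard p hp)
  refine ⟨hleast.csInf_eq, hleast.1, fun p hp => hleast.2 ⟨p, hp, rfl⟩, fun p hp heq => ?_⟩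
  rw [hjz] at heq
  exact eq_const_of_sum_eq_of_affine_lt hLJz.ge htangent (hcard p hp) heq

/-- for `0 < z ≤ δ₁` and `j ≥ 2`, the infimum of `Σ_{s=1}^j J(z_s)` over all
`(z_1,…,z_j)` with `Σ z_s = jz` equals `j·J(z)`, is attained, and is attained exactly at
the single point `z_1 = … = z_j = z`. -/
theorem inf_convolution_no_oscillation (k₁ k₂ : ℝ) (hk₁ : 0 < k₁) (hk₂ : 0 < k₂)
    (j : ℕ) (hj : 2 ≤ j) (z : ℝ) (hz0 : 0 < z) (hz : z ≤ delta1 k₁ k₂) :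
    sInf {y : EReal | ∃ p : Fin j → ℝ, (∑ s, p s) = j * z ∧ y = ∑ s, LJ k₁ k₂ (p s)} =
      ((j : ℝ) : EReal) * LJ k₁ k₂ z ∧
    ((j : ℝ) : EReal) * LJ k₁ k₂ z ∈
      {y : EReal | ∃ p : Fin j → ℝ, (∑ s, p s) = j * z ∧ y = ∑ s, LJ k₁ k₂ (p s)} ∧
    (∀ p : Fin j → ℝ, (∑ s, p s) = j * z →
      ((j : ℝ) : EReal) * LJ k₁ k₂ z ≤ ∑ s, LJ k₁ k₂ (p s)) ∧
    (∀ p : Fin j → ℝ, (∑ s, p s) = j * z →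
      (∑ s, LJ k₁ k₂ (p s)) = ((j : ℝ) : EReal) * LJ k₁ k₂ z → p = fun _ => z) :=
  inf_convolution_no_oscillation_general k₁ k₂ hk₁ hk₂ j z hz0 hz
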